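/- arXiv:1902.06812 — 6 statements merged into one kernel-verified Lean document; each statement's English description precedes it below -/
import Mathlib

section
/- Let I be a nonempty finite index set, s ≥ 1 an integer, and let V = ⋃_{ℓ∈I}(V_{ℓ,0} ∪ V_{ℓ,1}) where the sets V_{ℓ,j} (ℓ ∈ I, j ∈ {0,1}) are pairwise disjoint, each of size s; set n = s·|I|. Let G = (V,E) be a finite simple graph having no edge between V_{ℓ,0} and V_{ℓ,1} for any ℓ ∈ I. For p : I → {0,1} let V^{(p)} = ⋃_{ℓ∈I} V_{ℓ,p(ℓ)} and let G^{(p)} be the subgraph of G induced on V^{(p)}. Let m ∈ ℕ with 2m < n, let Λ = 4n², and define symmetric integer weights on V by: w(i,j) = −Λ if i ∈ V_{ℓ,0} and j ∈ V_{ℓ,1} for some ℓ ∈ I; otherwise w(i,j) = 2 if {i,j} ∈ E and w(i,j) = 1 if {i,j} ∉ E (for i ≠ j). Then the following are equivalent: (a) for every p : I → {0,1} there exists U ⊆ V^{(p)} with |U| ≤ m such that U is a vertex cover of G^{(p)}; (b) for every partition {S₁,S₂} of V into two nonempty parts there exists M ⊆ V with |M| ≤ 2m and W({S₁,S₂}_{−M})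 ≤ f_{n,m}(m). -/
/-- `W(S)`: the sum of the symmetric weight `w` over unordered pairs of distinct elements
of `S` (assuming `w` symmetric with zero diagonal, the halved double sum). -/
def Wsum {V : Type*} [DecidableEq V] (w : V → V → ℤ) (S : Finset V) : ℤ :=
  (∑ i ∈ S, ∑ j ∈ S, w i j) / 2

/-- `f_{n,m}(x) = 2·C(n,2) − Σ_{i=1}^{x}(n−i) − Σ_{j=1}^{2m−x}(n−j)`. -/
def fnm (n m x : ℕ) : ℤ :=
  2 * (n.choose 2 : ℤ) - (∑ i ∈ Finset.Icc 1 x, ((n : ℤ) - (i : ℤ))) -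
    (∑ j ∈ Finset.Icc 1 (2 * m - x), ((n : ℤ) - (j : ℤ)))

lemma two_choose_two (k : ℕ) : (2 * (k.choose 2) : ℤ) = (k:ℤ) * ((k:ℤ) - 1) := by
  induction k with
  | zero => simp
  | succ k ih =>
    rw [Nat.choose_succ_succ]
    push_cast
    push_cast at ih
    rw [Nat.choose_one_right] at *
    ring_nf
    ring_nf at ih
    nlinarith [ih]

lemma sum_Icc_eq (n m : ℕ) (h : m ≤ n) :
    (2:ℤ) * (∑ i ∈ Finset.Icc 1 m, ((n:ℤ) - i)) =
      (n:ℤ)*((n:ℤ)-1) - ((n:ℤ)-(m:ℤ))*((n:ℤ)-(m:ℤ)-1) := by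
  induction m with
  | zero => simp
  | succ m ih =>
    rw [Finset.sum_Icc_succ_top (by omega : 1 ≤ m + 1)]
    have := ih (by omega)
    push_cast
    push_cast at this
    linarith [this]

lemma fnm_val (n m : ℕ) (h : 2*m ≤ n) : fnm n m m = 2 * (((n - m).choose 2 : ℕ) : ℤ) := by
  have hx : 2*m - m = m := by omega
  rw [fnm, hx]
  have e1 := two_choose_two n
  have e2 := two_choose_two (n - m)
  have e3 := sum_Icc_eq n m (by omega)
  have hc : ((n - m : ℕ) : ℤ) = (n:ℤ) - m := by
    have : m ≤ n := by omega
    push_cast [this]; ring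
  rw [hc] at e2
  linarith

lemma convex1 (D a b m : ℤ) (ha : 0 ≤ a) (hb : 0 ≤ b) (hab : a + b ≤ 2*m) (hm : 2*m < D) :
    2*((D-m)*(D-m-1)) ≤ (D-a)*(D-a-1) + (D-b)*(D-b-1) := by
  nlinarith [sq_nonneg (a-b), sq_nonneg (a+b-2*m),
    mul_nonneg (by linarith : (0:ℤ) ≤ 2*m - a - b) (by linarith : (0:ℤ) ≤ 2*m + a + b)]

lemma convex2 (D a b m : ℤ) (ha : 0 ≤ a) (hb : 0 ≤ b) (hab : a + b ≤ 2*m) (hm : 2*m < D)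
    (hma : m < a) :
    2*((D-m)*(D-m-1)) + 2 ≤ (D-a)*(D-a-1) + (D-b)*(D-b-1) := by
  nlinarith [sq_nonneg (a-b), sq_nonneg (a+b-2*m),
    mul_nonneg (by linarith : (0:ℤ) ≤ 2*m - a - b) (by linarith : (0:ℤ) ≤ 2*m + a + b),
    mul_nonneg (by linarith : (0:ℤ) ≤ a - m - 1) (by linarith : (0:ℤ) ≤ 2*m - a - b)]

lemma doubleSum_eq {V : Type*} [DecidableEq V] (w : V → V → ℤ)
    (G : SimpleGraph V) [DecidableRel G.Adj] (S : Finset V)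
    (hw : ∀ i ∈ S, ∀ j ∈ S, w i j = if i = j then 0 else if G.Adj i j then 2 else 1) :
    ∑ i ∈ S, ∑ j ∈ S, w i j =
      ((S.card : ℤ)^2 - S.card) + ∑ i ∈ S, ∑ j ∈ S, (if G.Adj i j then (1:ℤ) else 0) := by
  have key : ∀ i ∈ S, ∀ j ∈ S, w i j =
      (if i = j then (0:ℤ) else 1) + (if G.Adj i j then (1:ℤ) else 0) := by
    intro i hi j hj
    rw [hw i hi j hj]
    by_cases hij : i = j
    · subst hij; simp [G.irrefl]
    · by_cases hadj : G.Adj i j <;> simp [hij, hadj]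
  calc ∑ i ∈ S, ∑ j ∈ S, w i j
      = ∑ i ∈ S, ∑ j ∈ S, ((if i = j then (0:ℤ) else 1) + (if G.Adj i j then (1:ℤ) else 0)) := by
        apply Finset.sum_congr rfl; intro i hi; apply Finset.sum_congr rfl; intro j hj
        exact key i hi j hj
    _ = (∑ i ∈ S, ∑ j ∈ S, (if i = j then (0:ℤ) else 1))
        + ∑ i ∈ S, ∑ j ∈ S, (if G.Adj i j then (1:ℤ) else 0) := by
        rw [← Finset.sum_add_distrib]
        apply Finset.sum_congr rfl; intro i _; rw [Finset.sum_add_distrib]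
    _ = ((S.card : ℤ)^2 - S.card) + ∑ i ∈ S, ∑ j ∈ S, (if G.Adj i j then (1:ℤ) else 0) := by
        congr 1
        have : ∀ i ∈ S, ∑ j ∈ S, (if i = j then (0:ℤ) else 1) = (S.card : ℤ) - 1 := by
          intro i hi
          have : ∑ j ∈ S, (if i = j then (0:ℤ) else 1)
              = ∑ j ∈ S, (1 - if i = j then (1:ℤ) else 0) := by
            apply Finset.sum_congr rfl; intro j _; by_cases h : i = j <;> simp [h]
          rw [this, Finset.sum_sub_distrib, Finset.sum_ite_eq, if_pos hi]
          simp
        rw [Finset.sum_congr rfl this]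
        simp [Finset.sum_const]
        ring

lemma A_nonneg {V : Type*} [DecidableEq V] (G : SimpleGraph V) [DecidableRel G.Adj]
    (S : Finset V) : (0:ℤ) ≤ ∑ i ∈ S, ∑ j ∈ S, (if G.Adj i j then (1:ℤ) else 0) := by
  apply Finset.sum_nonneg; intro i _; apply Finset.sum_nonneg; intro j _; positivity

lemma A_ge_two {V : Type*} [DecidableEq V] (G : SimpleGraph V) [DecidableRel G.Adj]
    (S : Finset V) {i j : V} (hi : i ∈ S) (hj : j ∈ S) (hadj : G.Adj i j) :
    (2:ℤ) ≤ ∑ i ∈ S, ∑ j ∈ S, (if G.Adj i j then (1:ℤ) else 0) := by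
  have hne : i ≠ j := G.ne_of_adj hadj
  rw [← Finset.sum_product']
  have hsub : ({(i,j), (j,i)} : Finset (V × V)) ⊆ S ×ˢ S := by
    intro p hp
    simp only [Finset.mem_insert, Finset.mem_singleton] at hp
    rcases hp with h | h <;> subst h <;> simp [hi, hj]
  calc (2:ℤ) = ∑ p ∈ ({(i,j), (j,i)} : Finset (V × V)), (if G.Adj p.1 p.2 then (1:ℤ) else 0) := by
        rw [Finset.sum_pair (by simp [hne])]
        simp [hadj, hadj.symm]
    _ ≤ ∑ p ∈ S ×ˢ S, (if G.Adj p.1 p.2 then (1:ℤ) else 0) := by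
        apply Finset.sum_le_sum_of_subset_of_nonneg hsub
        intro p _ _; positivity

lemma doubleSum_le {V : Type*} [DecidableEq V] (w : V → V → ℤ) (S : Finset V) (Λ : ℤ)
    (hub : ∀ i ∈ S, ∀ j ∈ S, w i j ≤ 2)
    {i j : V} (hi : i ∈ S) (hj : j ∈ S) (hne : i ≠ j)
    (hwij : w i j = -Λ) (hwji : w j i = -Λ) :
    ∑ i ∈ S, ∑ j ∈ S, w i j ≤ 2 * (S.card : ℤ)^2 - 2*Λ - 4 := by
  rw [← Finset.sum_product']
  have hsub : ({(i,j), (j,i)} : Finset (V × V)) ⊆ S ×ˢ S := by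
    intro p hp
    simp only [Finset.mem_insert, Finset.mem_singleton] at hp
    rcases hp with h | h <;> subst h <;> simp [hi, hj]
  rw [← Finset.sum_sdiff hsub]
  have h1 : ∑ p ∈ ({(i,j), (j,i)} : Finset (V × V)), w p.1 p.2 = -2*Λ := by
    rw [Finset.sum_pair (by simp [hne])]
    rw [hwij, hwji]; ring
  have h2 : ∑ p ∈ (S ×ˢ S) \ ({(i,j), (j,i)} : Finset (V × V)), w p.1 p.2
      ≤ 2 * (((S ×ˢ S) \ ({(i,j), (j,i)} : Finset (V × V))).card : ℤ) := by
    calc ∑ p ∈ (S ×ˢ S) \ _, w p.1 p.2 ≤ ∑ _p ∈ (S ×ˢ S) \ ({(i,j), (j,i)} : Finset (V × V)), (2:ℤ) := by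
          apply Finset.sum_le_sum
          intro p hp
          have hp' := Finset.mem_sdiff.mp hp
          have := Finset.mem_product.mp hp'.1
          exact hub p.1 this.1 p.2 this.2
      _ = 2 * (((S ×ˢ S) \ ({(i,j), (j,i)} : Finset (V × V))).card : ℤ) := by
          rw [Finset.sum_const]; push_cast; ring
  have h3 : (((S ×ˢ S) \ ({(i,j), (j,i)} : Finset (V × V))).card : ℤ)
      = (S.card : ℤ)^2 - 2 := by
    rw [Finset.card_sdiff_of_subset hsub, Finset.card_product]
    rw [Finset.card_pair (by simp [hne])]
    have : 2 ≤ S.card * S.card := by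
      have := Finset.card_le_card hsub
      simpa [Finset.card_pair (show (i,j) ≠ (j,i) by simp [hne])] using this
    push_cast [Nat.cast_sub this]
    ring
  rw [h3] at h2
  linarith

lemma doubleSum_le' {V : Type*} [DecidableEq V] (w : V → V → ℤ) (S : Finset V)
    (hub : ∀ i ∈ S, ∀ j ∈ S, w i j ≤ 2) :
    ∑ i ∈ S, ∑ j ∈ S, w i j ≤ 2 * (S.card : ℤ)^2 := by
  calc ∑ i ∈ S, ∑ j ∈ S, w i j ≤ ∑ i ∈ S, ∑ _j ∈ S, (2:ℤ) := by
        apply Finset.sum_le_sum; intro i hi; apply Finset.sum_le_sum; intro j hj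
        exact hub i hi j hj
    _ = 2 * (S.card : ℤ)^2 := by rw [Finset.sum_const, Finset.sum_const]; push_cast; ring

/-- The bad-pair case: if some part contains a `-Λ` pair, the bound holds with `M = ∅`. -/
lemma case_neg {V : Type*} [DecidableEq V] (w : V → V → ℤ) (S₁ S₂ : Finset V) (n : ℕ)
    (Λ F : ℤ) (hΛ : Λ = 4*(n:ℤ)^2) (hc : (S₁.card:ℤ) + S₂.card = 2*(n:ℤ))
    (hub : ∀ i j, w i j ≤ 2)
    {i j : V} (hi : i ∈ S₁) (hj : j ∈ S₁) (hne : i ≠ j)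
    (hwij : w i j = -Λ) (hwji : w j i = -Λ)
    (hF : 0 ≤ F) : Wsum w S₁ + Wsum w S₂ ≤ F := by
  have h1 := doubleSum_le w S₁ Λ (fun a _ b _ => hub a b) hi hj hne hwij hwji
  have h2 := doubleSum_le' w S₂ (fun a _ b _ => hub a b)
  have hq : (S₁.card:ℤ)^2 + (S₂.card:ℤ)^2 ≤ 4*(n:ℤ)^2 := by
    nlinarith [mul_nonneg (Int.ofNat_nonneg S₁.card) (Int.ofNat_nonneg S₂.card)]
  unfold Wsum
  set d1 := ∑ i ∈ S₁, ∑ j ∈ S₁, w i j with hd1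
  set d2 := ∑ i ∈ S₂, ∑ j ∈ S₂, w i j with hd2
  have hsum : d1 + d2 ≤ 2*F := by nlinarith
  omega

theorem stmt0 {ι V : Type*} [Fintype ι] [DecidableEq ι] [Nonempty ι]
    [Fintype V] [DecidableEq V]
    (s : ℕ) (hs : 1 ≤ s)
    (Vs : ι → Bool → Finset V)
    (hcard : ∀ ℓ j, (Vs ℓ j).card = s)
    (hdisj : ∀ ℓ j ℓ' j', (ℓ, j) ≠ (ℓ', j') → Disjoint (Vs ℓ j) (Vs ℓ' j'))
    (hcover : ∀ v : V, ∃ ℓ j, v ∈ Vs ℓ j)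
    (n : ℕ) (hn : n = s * Fintype.card ι)
    (G : SimpleGraph V) [DecidableRel G.Adj]
    (hnoedge : ∀ ℓ, ∀ i ∈ Vs ℓ false, ∀ j ∈ Vs ℓ true, ¬ G.Adj i j)
    (m : ℕ) (hm : 2 * m < n)
    (Λ : ℤ) (hΛ : Λ = 4 * (n : ℤ) ^ 2)
    (w : V → V → ℤ)
    (hw : ∀ i j, w i j =
      if ∃ ℓ, (i ∈ Vs ℓ false ∧ j ∈ Vs ℓ true) ∨ (i ∈ Vs ℓ true ∧ j ∈ Vs ℓ false)
      then -Λ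
      else if i = j then 0
      else if G.Adj i j then 2 else 1) :
    (∀ p : ι → Bool, ∃ U : Finset V,
        U ⊆ Finset.univ.biUnion (fun ℓ => Vs ℓ (p ℓ)) ∧ U.card ≤ m ∧
        ∀ i ∈ Finset.univ.biUnion (fun ℓ => Vs ℓ (p ℓ)),
          ∀ j ∈ Finset.univ.biUnion (fun ℓ => Vs ℓ (p ℓ)),
            G.Adj i j → i ∈ U ∨ j ∈ U) ↔
    (∀ S₁ S₂ : Finset V, S₁.Nonempty → S₂.Nonempty → Disjoint S₁ S₂ →
        S₁ ∪ S₂ = (Finset.univ : Finset V) →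
        ∃ M : Finset V, M.card ≤ 2 * m ∧
          Wsum w (S₁ \ M) + Wsum w (S₂ \ M) ≤ fnm n m m) := by
  classical
  -- membership is unique
  have huniq : ∀ (v : V) (ℓ : ι) (j : Bool) (ℓ' : ι) (j' : Bool),
      v ∈ Vs ℓ j → v ∈ Vs ℓ' j' → ℓ = ℓ' ∧ j = j' := by
    intro v ℓ j ℓ' j' h1 h2
    by_contra hcon
    have hne : (ℓ, j) ≠ (ℓ', j') := by
      intro he
      apply hcon
      exact ⟨congrArg Prod.fst he, congrArg Prod.snd he⟩
    exact (Finset.disjoint_left.mp (hdisj ℓ j ℓ' j' hne)) h1 h2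
  -- weights are bounded by 2
  have hub : ∀ i j, w i j ≤ 2 := by
    intro i j
    rw [hw i j]
    have hΛ0 : 0 ≤ Λ := by rw [hΛ]; positivity
    split_ifs <;> omega
  -- weight structure inside a transversal
  have hwT : ∀ (q : ι → Bool), ∀ i ∈ Finset.univ.biUnion (fun ℓ => Vs ℓ (q ℓ)),
      ∀ j ∈ Finset.univ.biUnion (fun ℓ => Vs ℓ (q ℓ)),
      w i j = if i = j then 0 else if G.Adj i j then 2 else 1 := by
    intro q i hi j hj
    simp only [Finset.mem_biUnion, Finset.mem_univ, true_and] at hi hj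
    obtain ⟨ℓi, hℓi⟩ := hi
    obtain ⟨ℓj, hℓj⟩ := hj
    rw [hw i j, if_neg]
    rintro ⟨ℓ₀, ⟨hif, hjt⟩ | ⟨hit, hjf⟩⟩
    · obtain ⟨e1, e2⟩ := huniq i ℓ₀ false ℓi (q ℓi) hif hℓi
      obtain ⟨e3, e4⟩ := huniq j ℓ₀ true ℓj (q ℓj) hjt hℓj
      subst e1
      rw [← e3] at e4
      rw [← e2] at e4
      exact Bool.noConfusion e4
    · obtain ⟨e1, e2⟩ := huniq i ℓ₀ true ℓi (q ℓi) hit hℓi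
      obtain ⟨e3, e4⟩ := huniq j ℓ₀ false ℓj (q ℓj) hjf hℓj
      subst e1
      rw [← e3] at e4
      rw [← e2] at e4
      exact Bool.noConfusion e4
  -- cardinality of a transversal
  have hTcard : ∀ (q : ι → Bool), (Finset.univ.biUnion (fun ℓ => Vs ℓ (q ℓ))).card = n := by
    intro q
    rw [Finset.card_biUnion]
    · simp only [hcard]
      rw [Finset.sum_const, Finset.card_univ, smul_eq_mul, hn, mul_comm]
    · intro x _ y _ hxy
      exact hdisj x (q x) y (q y) (by simp [hxy])
  -- cardinality of the whole vertex set
  have hVcard : ((Finset.univ : Finset V).card : ℤ) = 2 * (n : ℤ) := by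
    have huniv : (Finset.univ : Finset V)
        = Finset.univ.biUnion (fun q : ι × Bool => Vs q.1 q.2) := by
      symm
      apply Finset.eq_univ_iff_forall.mpr
      intro v
      obtain ⟨ℓ, j, hv⟩ := hcover v
      exact Finset.mem_biUnion.mpr ⟨(ℓ, j), Finset.mem_univ _, hv⟩
    rw [huniv, Finset.card_biUnion]
    · simp only [hcard]
      rw [Finset.sum_const, Finset.card_univ, smul_eq_mul]
      push_cast
      rw [Fintype.card_prod, Fintype.card_bool, hn]
      push_cast
      ring
    · intro x _ y _ hxy
      exact hdisj x.1 x.2 y.1 y.2 (by simpa using hxy)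
  have hF0 : 0 ≤ fnm n m m := by
    rw [fnm_val n m (le_of_lt hm)]; positivity
  constructor
  · -- covers imply partition bound
    intro ha S₁ S₂ h1ne h2ne hdS hunion
    have hres1 : ∀ v : V, v ∉ S₁ → v ∈ S₂ := by
      intro v hv
      have hv' : v ∈ S₁ ∪ S₂ := by rw [hunion]; exact Finset.mem_univ v
      rcases Finset.mem_union.mp hv' with h | h
      · exact absurd h hv
      · exact h
    have hres2 : ∀ v : V, v ∉ S₂ → v ∈ S₁ := by
      intro v hv
      have hv' : v ∈ S₁ ∪ S₂ := by rw [hunion]; exact Finset.mem_univ v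
      rcases Finset.mem_union.mp hv' with h | h
      · exact h
      · exact absurd h hv
    have hc2n : (S₁.card : ℤ) + S₂.card = 2 * (n : ℤ) := by
      have h := Finset.card_union_of_disjoint hdS
      rw [hunion] at h
      rw [← hVcard, h]
      push_cast
      ring
    by_cases hcross : ∃ (ℓ : ι) (i : V) (j : V), i ∈ Vs ℓ false ∧ j ∈ Vs ℓ true ∧
        ((i ∈ S₁ ∧ j ∈ S₁) ∨ (i ∈ S₂ ∧ j ∈ S₂))
    · obtain ⟨ℓ, i, j, hif, hjt, hcase⟩ := hcross
      have hne : i ≠ j := by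
        intro he
        subst he
        exact (Finset.disjoint_left.mp (hdisj ℓ false ℓ true (by simp))) hif hjt
      have hwij : w i j = -Λ := by rw [hw]; exact if_pos ⟨ℓ, Or.inl ⟨hif, hjt⟩⟩
      have hwji : w j i = -Λ := by rw [hw]; exact if_pos ⟨ℓ, Or.inr ⟨hjt, hif⟩⟩
      refine ⟨∅, by simp, ?_⟩
      rw [Finset.sdiff_empty, Finset.sdiff_empty]
      rcases hcase with ⟨hi1, hj1⟩ | ⟨hi2, hj2⟩
      · exact case_neg w S₁ S₂ n Λ _ hΛ hc2n hub hi1 hj1 hne hwij hwji hF0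
      · rw [add_comm]
        exact case_neg w S₂ S₁ n Λ _ hΛ (by linarith) hub hi2 hj2 hne hwij hwji hF0
    · -- the partition is induced by a transversal choice p
      set p : ι → Bool := fun ℓ => decide ((Vs ℓ true ∩ S₁).Nonempty) with hp_def
      have hmem : ∀ ℓ (u v : V), u ∈ Vs ℓ false → v ∈ Vs ℓ true →
          ¬((u ∈ S₁ ∧ v ∈ S₁) ∨ (u ∈ S₂ ∧ v ∈ S₂)) := by
        intro ℓ u v hu hv hc
        exact hcross ⟨ℓ, u, v, hu, hv, hc⟩
      have hPsub : ∀ ℓ, Vs ℓ (p ℓ) ⊆ S₁ ∧ Vs ℓ (!(p ℓ)) ⊆ S₂ := by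
        intro ℓ
        by_cases hne : (Vs ℓ true ∩ S₁).Nonempty
        · have hp : p ℓ = true := by simp [hp_def, hne]
          obtain ⟨j0, hj0⟩ := hne
          rw [Finset.mem_inter] at hj0
          have hf2 : Vs ℓ false ⊆ S₂ := by
            intro u hu
            apply hres1
            intro hu1
            exact hmem ℓ u j0 hu hj0.1 (Or.inl ⟨hu1, hj0.2⟩)
          obtain ⟨i0, hi0⟩ : (Vs ℓ false).Nonempty := by
            rw [← Finset.card_pos, hcard]; omega
          have ht1 : Vs ℓ true ⊆ S₁ := by
            intro v hv
            apply hres2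
            intro hv2
            exact hmem ℓ i0 v hi0 hv (Or.inr ⟨hf2 hi0, hv2⟩)
          rw [hp]
          exact ⟨ht1, by simpa using hf2⟩
        · have hp : p ℓ = false := by simp [hp_def, hne]
          have ht2 : Vs ℓ true ⊆ S₂ := by
            intro v hv
            apply hres1
            intro hv1
            exact hne ⟨v, Finset.mem_inter.mpr ⟨hv, hv1⟩⟩
          obtain ⟨j0, hj0⟩ : (Vs ℓ true).Nonempty := by
            rw [← Finset.card_pos, hcard]; omega
          have hf1 : Vs ℓ false ⊆ S₁ := by
            intro u hu
            apply hres2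
            intro hu2
            exact hmem ℓ u j0 hu hj0 (Or.inr ⟨hu2, ht2 hj0⟩)
          rw [hp]
          exact ⟨hf1, by simpa using ht2⟩
      have hS1 : S₁ = Finset.univ.biUnion (fun ℓ => Vs ℓ (p ℓ)) := by
        apply Finset.Subset.antisymm
        · intro v hv
          obtain ⟨ℓ, j, hvj⟩ := hcover v
          have hj : j = p ℓ := by
            by_contra hjne
            have hjb : j = !(p ℓ) := by
              revert hjne; cases j <;> cases p ℓ <;> simp
            have hv2 : v ∈ S₂ := (hPsub ℓ).2 (hjb ▸ hvj)
            exact (Finset.disjoint_left.mp hdS) hv hv2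
          exact Finset.mem_biUnion.mpr ⟨ℓ, Finset.mem_univ _, hj ▸ hvj⟩
        · intro v hv
          obtain ⟨ℓ, _, hvℓ⟩ := Finset.mem_biUnion.mp hv
          exact (hPsub ℓ).1 hvℓ
      have hS2 : S₂ = Finset.univ.biUnion (fun ℓ => Vs ℓ (!(p ℓ))) := by
        apply Finset.Subset.antisymm
        · intro v hv
          obtain ⟨ℓ, j, hvj⟩ := hcover v
          have hj : j = !(p ℓ) := by
            by_contra hjne
            have hjb : j = p ℓ := by
              revert hjne; cases j <;> cases p ℓ <;> simp
            have hv1 : v ∈ S₁ := (hPsub ℓ).1 (hjb ▸ hvj)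
            exact (Finset.disjoint_left.mp hdS) hv1 hv
          exact Finset.mem_biUnion.mpr ⟨ℓ, Finset.mem_univ _, hj ▸ hvj⟩
        · intro v hv
          obtain ⟨ℓ, _, hvℓ⟩ := Finset.mem_biUnion.mp hv
          exact (hPsub ℓ).2 hvℓ
      obtain ⟨U₁, hU₁sub, hU₁card, hU₁cov⟩ := ha p
      obtain ⟨U₂, hU₂sub, hU₂card, hU₂cov⟩ := ha (fun ℓ => !(p ℓ))
      obtain ⟨U₁', hU₁sub', hU₁T, hU₁card'⟩ :=
        Finset.exists_subsuperset_card_eq hU₁sub hU₁card (by rw [hTcard p]; omega)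
      obtain ⟨U₂', hU₂sub', hU₂T, hU₂card'⟩ :=
        Finset.exists_subsuperset_card_eq hU₂sub hU₂card
          (by rw [hTcard (fun ℓ => !(p ℓ))]; omega)
      refine ⟨U₁' ∪ U₂', ?_, ?_⟩
      · calc (U₁' ∪ U₂').card ≤ U₁'.card + U₂'.card := Finset.card_union_le _ _
          _ ≤ 2 * m := by omega
      · have hU₁S : U₁' ⊆ S₁ := hS1 ▸ hU₁T
        have hU₂S : U₂' ⊆ S₂ := hS2 ▸ hU₂T
        have hsd1 : S₁ \ (U₁' ∪ U₂') = S₁ \ U₁' := by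
          ext v
          simp only [Finset.mem_sdiff, Finset.mem_union]
          constructor
          · rintro ⟨hv1, hv2⟩
            exact ⟨hv1, fun h => hv2 (Or.inl h)⟩
          · rintro ⟨hv1, hv2⟩
            refine ⟨hv1, ?_⟩
            rintro (h | h)
            · exact hv2 h
            · exact (Finset.disjoint_left.mp hdS) hv1 (hU₂S h)
        have hsd2 : S₂ \ (U₁' ∪ U₂') = S₂ \ U₂' := by
          ext v
          simp only [Finset.mem_sdiff, Finset.mem_union]
          constructor
          · rintro ⟨hv1, hv2⟩
            exact ⟨hv1, fun h => hv2 (Or.inr h)⟩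
          · rintro ⟨hv1, hv2⟩
            refine ⟨hv1, ?_⟩
            rintro (h | h)
            · exact (Finset.disjoint_right.mp hdS) hv1 (hU₁S h)
            · exact hv2 h
        have hk1 : (S₁ \ U₁').card = n - m := by
          rw [Finset.card_sdiff_of_subset hU₁S, hU₁card', hS1, hTcard]
        have hk2 : (S₂ \ U₂').card = n - m := by
          rw [Finset.card_sdiff_of_subset hU₂S, hU₂card', hS2, hTcard]
        have hnoadj1 : ∀ i ∈ S₁ \ U₁', ∀ j ∈ S₁ \ U₁', ¬ G.Adj i j := by
          intro i hi j hj hadj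
          rw [Finset.mem_sdiff] at hi hj
          have hiT := hS1 ▸ hi.1
          have hjT := hS1 ▸ hj.1
          rcases hU₁cov i hiT j hjT hadj with h | h
          · exact hi.2 (hU₁sub' h)
          · exact hj.2 (hU₁sub' h)
        have hnoadj2 : ∀ i ∈ S₂ \ U₂', ∀ j ∈ S₂ \ U₂', ¬ G.Adj i j := by
          intro i hi j hj hadj
          rw [Finset.mem_sdiff] at hi hj
          have hiT := hS2 ▸ hi.1
          have hjT := hS2 ▸ hj.1
          rcases hU₂cov i hiT j hjT hadj with h | h
          · exact hi.2 (hU₂sub' h)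
          · exact hj.2 (hU₂sub' h)
        have hd1 : ∑ i ∈ S₁ \ U₁', ∑ j ∈ S₁ \ U₁', w i j
            = ((n - m : ℕ) : ℤ)^2 - ((n - m : ℕ) : ℤ) := by
          rw [doubleSum_eq w G _
            (fun i hi j hj => hwT p i (hS1 ▸ (Finset.mem_sdiff.mp hi).1)
              j (hS1 ▸ (Finset.mem_sdiff.mp hj).1))]
          rw [Finset.sum_eq_zero (fun i hi => Finset.sum_eq_zero
            (fun j hj => if_neg (hnoadj1 i hi j hj)))]
          rw [hk1]
          ring
        have hd2 : ∑ i ∈ S₂ \ U₂', ∑ j ∈ S₂ \ U₂', w i j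
            = ((n - m : ℕ) : ℤ)^2 - ((n - m : ℕ) : ℤ) := by
          rw [doubleSum_eq w G _
            (fun i hi j hj => hwT (fun ℓ => !(p ℓ)) i (hS2 ▸ (Finset.mem_sdiff.mp hi).1)
              j (hS2 ▸ (Finset.mem_sdiff.mp hj).1))]
          rw [Finset.sum_eq_zero (fun i hi => Finset.sum_eq_zero
            (fun j hj => if_neg (hnoadj2 i hi j hj)))]
          rw [hk2]
          ring
        have h2c := two_choose_two (n - m)
        rw [fnm_val n m (le_of_lt hm)]
        unfold Wsum
        rw [hsd1, hsd2, hd1, hd2]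
        have hsq : ((n - m : ℕ) : ℤ)^2 - ((n - m : ℕ) : ℤ)
            = 2 * (((n - m).choose 2 : ℕ) : ℤ) := by
          rw [h2c]; ring
        rw [hsq]
        omega
  · -- partition bound implies covers
    intro hb p
    have hS2eq : (Finset.univ : Finset V) \ (Finset.univ.biUnion fun ℓ => Vs ℓ (p ℓ))
        = Finset.univ.biUnion (fun ℓ => Vs ℓ (!(p ℓ))) := by
      apply Finset.Subset.antisymm
      · intro v hv
        rw [Finset.mem_sdiff] at hv
        obtain ⟨ℓ, j, hvj⟩ := hcover v
        have hjne : j ≠ p ℓ := fun he =>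
          hv.2 (Finset.mem_biUnion.mpr ⟨ℓ, Finset.mem_univ _, he ▸ hvj⟩)
        have hj : j = !(p ℓ) := by
          revert hjne; cases j <;> cases p ℓ <;> simp
        exact Finset.mem_biUnion.mpr ⟨ℓ, Finset.mem_univ _, hj ▸ hvj⟩
      · intro v hv
        rw [Finset.mem_sdiff]
        refine ⟨Finset.mem_univ _, ?_⟩
        intro hv'
        obtain ⟨ℓ, _, hvℓ⟩ := Finset.mem_biUnion.mp hv
        obtain ⟨ℓ', _, hvℓ'⟩ := Finset.mem_biUnion.mp hv'
        obtain ⟨e1, e2⟩ := huniq v ℓ (!(p ℓ)) ℓ' (p ℓ') hvℓ hvℓ'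
        subst e1
        revert e2; cases p ℓ <;> simp
    set T1 := Finset.univ.biUnion (fun ℓ => Vs ℓ (p ℓ)) with hT1def
    set T2 := (Finset.univ : Finset V) \ T1 with hT2def
    have hT1card : T1.card = n := hTcard p
    have hT2card : T2.card = n := by rw [hS2eq]; exact hTcard _
    have hS1ne : T1.Nonempty := by rw [← Finset.card_pos, hT1card]; omega
    have hS2ne : T2.Nonempty := by rw [← Finset.card_pos, hT2card]; omega
    obtain ⟨M, hMcard, hMW⟩ := hb T1 T2 hS1ne hS2ne Finset.disjoint_sdiff
      (Finset.union_sdiff_of_subset (Finset.subset_univ _))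
    have hab : (M ∩ T1).card + (M ∩ T2).card ≤ 2 * m := by
      have hdisj12 : Disjoint (M ∩ T1) (M ∩ T2) :=
        Finset.disjoint_sdiff.mono Finset.inter_subset_right Finset.inter_subset_right
      have hu : (M ∩ T1) ∪ (M ∩ T2) = M := by
        rw [← Finset.inter_union_distrib_left,
          Finset.union_sdiff_of_subset (Finset.subset_univ _), Finset.inter_univ]
      calc (M ∩ T1).card + (M ∩ T2).card = ((M ∩ T1) ∪ (M ∩ T2)).card :=
            (Finset.card_union_of_disjoint hdisj12).symm
        _ = M.card := by rw [hu]
        _ ≤ 2 * m := hMcard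
    have han : (M ∩ T1).card ≤ n := by
      calc (M ∩ T1).card ≤ T1.card := Finset.card_le_card Finset.inter_subset_right
        _ = n := hT1card
    have hbn : (M ∩ T2).card ≤ n := by
      calc (M ∩ T2).card ≤ T2.card := Finset.card_le_card Finset.inter_subset_right
        _ = n := hT2card
    have hk1 : (T1 \ M).card = n - (M ∩ T1).card := by
      have : T1 \ M = T1 \ (M ∩ T1) := by
        ext v; simp only [Finset.mem_sdiff, Finset.mem_inter]; tauto
      rw [this, Finset.card_sdiff_of_subset Finset.inter_subset_right, hT1card]
    have hk2 : (T2 \ M).card = n - (M ∩ T2).card := by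
      have : T2 \ M = T2 \ (M ∩ T2) := by
        ext v; simp only [Finset.mem_sdiff, Finset.mem_inter]; tauto
      rw [this, Finset.card_sdiff_of_subset Finset.inter_subset_right, hT2card]
    rw [fnm_val n m (le_of_lt hm)] at hMW
    unfold Wsum at hMW
    -- name the main integer quantities
    set a := (M ∩ T1).card with ha_def
    set b := (M ∩ T2).card with hb_def
    set A1 := ∑ i ∈ T1 \ M, ∑ j ∈ T1 \ M, (if G.Adj i j then (1:ℤ) else 0) with hA1def
    set A2 := ∑ i ∈ T2 \ M, ∑ j ∈ T2 \ M, (if G.Adj i j then (1:ℤ) else 0) with hA2def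
    set d1 := ∑ i ∈ T1 \ M, ∑ j ∈ T1 \ M, w i j with hd1def
    set d2 := ∑ i ∈ T2 \ M, ∑ j ∈ T2 \ M, w i j with hd2def
    set ca := (((n - a).choose 2 : ℕ) : ℤ) with hca_def
    set cb := (((n - b).choose 2 : ℕ) : ℤ) with hcb_def
    set cm := (((n - m).choose 2 : ℕ) : ℤ) with hcm_def
    have hA1 : 0 ≤ A1 := A_nonneg G _
    have hA2 : 0 ≤ A2 := A_nonneg G _
    have hcastA : ((n - a : ℕ) : ℤ) = (n : ℤ) - a := by
      push_cast [han]; ring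
    have hcastB : ((n - b : ℕ) : ℤ) = (n : ℤ) - b := by
      push_cast [hbn]; ring
    have hcastM : ((n - m : ℕ) : ℤ) = (n : ℤ) - m := by
      push_cast [(by omega : m ≤ n)]; ring
    have h2ca : 2 * ca = ((n:ℤ) - a) * (((n:ℤ) - a) - 1) := by
      rw [hca_def, two_choose_two, hcastA]
    have h2cb : 2 * cb = ((n:ℤ) - b) * (((n:ℤ) - b) - 1) := by
      rw [hcb_def, two_choose_two, hcastB]
    have h2cm : 2 * cm = ((n:ℤ) - m) * (((n:ℤ) - m) - 1) := by
      rw [hcm_def, two_choose_two, hcastM]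
    have hd1 : d1 = 2 * ca + A1 := by
      rw [hd1def, doubleSum_eq w G _
        (fun i hi j hj => hwT p i (Finset.sdiff_subset hi) j (Finset.sdiff_subset hj))]
      rw [hk1, ← hA1def, hcastA, h2ca]
      ring
    have hd2 : d2 = 2 * cb + A2 := by
      rw [hd2def, doubleSum_eq w G _
        (fun i hi j hj => by
          have hi' : i ∈ Finset.univ.biUnion (fun ℓ => Vs ℓ (!(p ℓ))) := by
            rw [← hS2eq]; exact Finset.sdiff_subset hi
          have hj' : j ∈ Finset.univ.biUnion (fun ℓ => Vs ℓ (!(p ℓ))) := by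
            rw [← hS2eq]; exact Finset.sdiff_subset hj
          exact hwT _ i hi' j hj')]
      rw [hk2, ← hA2def, hcastB, h2cb]
      ring
    have habz : (a : ℤ) + (b : ℤ) ≤ 2 * (m : ℤ) := by exact_mod_cast hab
    have hmz : 2 * (m : ℤ) < (n : ℤ) := by exact_mod_cast hm
    have hconv : 2 * (2 * cm) ≤ 2 * ca + 2 * cb := by
      have := convex1 (n : ℤ) a b m (Int.ofNat_nonneg a) (Int.ofNat_nonneg b) habz hmz
      rw [h2ca, h2cb, h2cm]
      linarith
    have ham : a ≤ m := by
      by_contra hcon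
      have hconv2 : 2 * (2 * cm) + 2 ≤ 2 * ca + 2 * cb := by
        have := convex2 (n : ℤ) a b m (Int.ofNat_nonneg a) (Int.ofNat_nonneg b) habz hmz
          (by exact_mod_cast Nat.lt_of_not_le hcon)
        rw [h2ca, h2cb, h2cm]
        linarith
      omega
    have hA1le : A1 ≤ 1 := by omega
    refine ⟨M ∩ T1, Finset.inter_subset_right, ham, ?_⟩
    intro i hi j hj hadj
    by_contra hcon
    push_neg at hcon
    have hiM : i ∉ M := fun h => hcon.1 (Finset.mem_inter.mpr ⟨h, hi⟩)
    have hjM : j ∉ M := fun h => hcon.2 (Finset.mem_inter.mpr ⟨h, hj⟩)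
    have h2 := A_ge_two G (T1 \ M) (Finset.mem_sdiff.mpr ⟨hi, hiM⟩)
      (Finset.mem_sdiff.mpr ⟨hj, hjM⟩) hadj
    rw [← hA1def] at h2
    omega
end

section
/- Let m ≥ 1 and let a, b, c be integers with a, b, c ≥ m+1 and a + b + c = 5m + 2. Then min{ C(a−x,2) + C(b−y,2) + C(c−z,2) : x, y, z ≥ 0 integers, x + y + z = m, x ≤ a, y ≤ b, z ≤ c } ≤ C(2m,2) + 2·C(m+1,2). Moreover, for (a,b,c) = (3m, m+1, m+1) this minimum equals exactly C(2m,2) + 2·C(m+1,2). -/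
lemma two_mul_choose_two (n : ℕ) : 2 * n.choose 2 = n * (n - 1) := by
  rcases n with _ | k
  · simp
  · rw [Nat.choose_two_right, Nat.mul_div_cancel']
    simpa [Nat.mul_comm] using (Nat.even_mul_succ_self k).two_dvd

set_option maxHeartbeats 1000000 in
theorem stmt1 (m a b c : ℕ) (hm : 1 ≤ m)
    (ha : m + 1 ≤ a) (hb : m + 1 ≤ b) (hc : m + 1 ≤ c)
    (habc : a + b + c = 5 * m + 2) :
    (∃ x y z : ℕ, x + y + z = m ∧ x ≤ a ∧ y ≤ b ∧ z ≤ c ∧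
        (a - x).choose 2 + (b - y).choose 2 + (c - z).choose 2 ≤
          (2 * m).choose 2 + 2 * (m + 1).choose 2) ∧
      (a = 3 * m → b = m + 1 → c = m + 1 →
        (∀ x y z : ℕ, x + y + z = m → x ≤ a → y ≤ b → z ≤ c →
            (2 * m).choose 2 + 2 * (m + 1).choose 2 ≤
              (a - x).choose 2 + (b - y).choose 2 + (c - z).choose 2) ∧
          (∃ x y z : ℕ, x + y + z = m ∧ x ≤ a ∧ y ≤ b ∧ z ≤ c ∧
            (a - x).choose 2 + (b - y).choose 2 + (c - z).choose 2 =
              (2 * m).choose 2 + 2 * (m + 1).choose 2)) := by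
  constructor
  · -- existence of a good removal
    set t1 := min a (2 * m) with ht1
    set t2 := min b (min (2 * m) (3 * m + 1 - t1)) with ht2
    set t3 := 4 * m + 2 - t1 - t2 with ht3
    have hb1 : t1 ≤ a ∧ m + 1 ≤ t1 ∧ t1 ≤ 2 * m := by omega
    have hb2 : t2 ≤ b ∧ m + 1 ≤ t2 ∧ t2 ≤ 2 * m := by omega
    have hb3 : t3 ≤ c ∧ m + 1 ≤ t3 ∧ t3 ≤ 2 * m := by omega
    have hsum : t1 + t2 + t3 = 4 * m + 2 := by omega
    refine ⟨a - t1, b - t2, c - t3, by omega, by omega, by omega, by omega, ?_⟩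
    have e1 : a - (a - t1) = t1 := by omega
    have e2 : b - (b - t2) = t2 := by omega
    have e3 : c - (c - t3) = t3 := by omega
    rw [e1, e2, e3]
    have h2 : 2 * (t1.choose 2 + t2.choose 2 + t3.choose 2) ≤
        2 * ((2 * m).choose 2 + 2 * (m + 1).choose 2) := by
      have k1 := two_mul_choose_two t1
      have k2 := two_mul_choose_two t2
      have k3 := two_mul_choose_two t3
      have k4 := two_mul_choose_two (2 * m)
      have k5 := two_mul_choose_two (m + 1)
      have : t1 * (t1 - 1) + t2 * (t2 - 1) + t3 * (t3 - 1) ≤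
          2 * m * (2 * m - 1) + 2 * ((m + 1) * (m + 1 - 1)) := by
        obtain ⟨h1a, h1l, h1u⟩ := hb1
        obtain ⟨h2a, h2l, h2u⟩ := hb2
        obtain ⟨h3a, h3l, h3u⟩ := hb3
        zify [show 1 ≤ t1 from by omega, show 1 ≤ t2 from by omega,
          show 1 ≤ t3 from by omega, show 1 ≤ 2 * m from by omega,
          show 1 ≤ m + 1 from by omega] at *
        nlinarith [mul_nonneg (by linarith : (0:ℤ) ≤ 2 * m - t1) (by linarith : (0:ℤ) ≤ t1 - (m + 1)),
          mul_nonneg (by linarith : (0:ℤ) ≤ 2 * m - t2) (by linarith : (0:ℤ) ≤ t2 - (m + 1)),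
          mul_nonneg (by linarith : (0:ℤ) ≤ 2 * m - t3) (by linarith : (0:ℤ) ≤ t3 - (m + 1))]
      omega
    omega
  · rintro rfl rfl rfl
    constructor
    · intro x y z hxyz hx hy hz
      have h2 : 2 * ((2 * m).choose 2 + 2 * (m + 1).choose 2) ≤
          2 * ((3 * m - x).choose 2 + (m + 1 - y).choose 2 + (m + 1 - z).choose 2) := by
        have k1 := two_mul_choose_two (3 * m - x)
        have k2 := two_mul_choose_two (m + 1 - y)
        have k3 := two_mul_choose_two (m + 1 - z)
        have k4 := two_mul_choose_two (2 * m)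
        have k5 := two_mul_choose_two (m + 1)
        have hyle : y ≤ m := by omega
        have hzle : z ≤ m := by omega
        have hxle : x ≤ m := by omega
        have : 2 * m * (2 * m - 1) + 2 * ((m + 1) * (m + 1 - 1)) ≤
            (3 * m - x) * (3 * m - x - 1) + (m + 1 - y) * (m + 1 - y - 1) +
              (m + 1 - z) * (m + 1 - z - 1) := by
          zify [show x ≤ 3 * m from by omega, show y ≤ m + 1 from by omega,
            show z ≤ m + 1 from by omega, show 1 ≤ 3 * m - x from by omega,
            show 1 ≤ m + 1 - y from by omega, show 1 ≤ m + 1 - z from by omega,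
            show 1 ≤ 2 * m from by omega, show 1 ≤ m + 1 from by omega]
          have hx' : (x : ℤ) = m - y - z := by omega
          rw [hx']
          nlinarith [sq_nonneg ((y : ℤ) + z), sq_nonneg (y : ℤ), sq_nonneg (z : ℤ),
            mul_nonneg (by linarith : (0:ℤ) ≤ (m : ℤ) - 1) (by positivity : (0:ℤ) ≤ (y:ℤ) + z)]
        omega
      omega
    · refine ⟨m, 0, 0, by omega, by omega, by omega, by omega, ?_⟩
      rw [show 3 * m - m = 2 * m from by omega]
      simp
      ring
end

section
/- Let F = C₁ ∧ … ∧ C_α be a 3-CNF formula over a variable set X, where each clause Cᵢ is a disjunction of three literals ℓ_{i,1} ∨ ℓ_{i,2} ∨ ℓ_{i,3} (each literal being a variable or the negation of a variable). Define the finite simple graph G on vertex set {1,…,α} × {1,2,3}, where distinct vertices (i,k) and (i',k') are adjacent if and only if i = i' (same clause) or the literals ℓ_{i,k} and ℓ_{i',k'} are complementary (i.e., they are on the same variable with opposite polarities). Then the following are equivalent: (a) F is satisfiable (some truth assignment of X makes at least one literal true in every clause); (b) G has an independent set of size α; (c) G has a vertex cover of size 2α. -/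
/-- The graph of the classical reduction from 3SAT to IndependentSet: vertices are the
literal occurrences `(i, k)` (occurrence `k` of clause `i`); two distinct vertices are
adjacent iff they belong to the same clause or carry complementary literals.
A literal is encoded as a pair (variable, polarity). -/
def satGraph {X : Type*} (α : ℕ) (lit : Fin α → Fin 3 → X × Bool) :
    SimpleGraph (Fin α × Fin 3) :=
  SimpleGraph.fromRel (fun v v' =>
    v.1 = v'.1 ∨ ((lit v.1 v.2).1 = (lit v'.1 v'.2).1 ∧ (lit v.1 v.2).2 ≠ (lit v'.1 v'.2).2))

/-- `S` is an independent set of `G`: no two of its vertices are adjacent. -/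
def IsIndepSet {V : Type*} (G : SimpleGraph V) (S : Finset V) : Prop :=
  ∀ u ∈ S, ∀ v ∈ S, ¬ G.Adj u v

/-- `C` is a vertex cover of `G`: every edge has at least one endpoint in `C`. -/
def IsVertexCover {V : Type*} (G : SimpleGraph V) (C : Finset V) : Prop :=
  ∀ u v : V, G.Adj u v → u ∈ C ∨ v ∈ C

theorem stmt2 {X : Type*} (α : ℕ) (lit : Fin α → Fin 3 → X × Bool) :
    ((∃ τ : X → Bool, ∀ i : Fin α, ∃ k : Fin 3, τ (lit i k).1 = (lit i k).2) ↔
        (∃ S : Finset (Fin α × Fin 3), S.card = α ∧ IsIndepSet (satGraph α lit) S)) ∧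
      ((∃ τ : X → Bool, ∀ i : Fin α, ∃ k : Fin 3, τ (lit i k).1 = (lit i k).2) ↔
        (∃ C : Finset (Fin α × Fin 3), C.card = 2 * α ∧ IsVertexCover (satGraph α lit) C)) := by
  classical
  have card3 : Fintype.card (Fin α × Fin 3) = 3 * α := by
    simp [Fintype.card_prod]; ring
  have adj_iff : ∀ u v : Fin α × Fin 3, (satGraph α lit).Adj u v ↔ u ≠ v ∧
      (u.1 = v.1 ∨ ((lit u.1 u.2).1 = (lit v.1 v.2).1 ∧ (lit u.1 u.2).2 ≠ (lit v.1 v.2).2)) := by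
    intro u v
    simp only [satGraph, SimpleGraph.fromRel_adj]
    constructor
    · rintro ⟨hne, h | h⟩
      · exact ⟨hne, h⟩
      · rcases h with h | ⟨h1, h2⟩
        · exact ⟨hne, Or.inl h.symm⟩
        · exact ⟨hne, Or.inr ⟨h1.symm, fun e => h2 e.symm⟩⟩
    · rintro ⟨hne, h⟩
      exact ⟨hne, Or.inl h⟩
  have sat_iff_indep : (∃ τ : X → Bool, ∀ i : Fin α, ∃ k : Fin 3, τ (lit i k).1 = (lit i k).2) ↔
      (∃ S : Finset (Fin α × Fin 3), S.card = α ∧ IsIndepSet (satGraph α lit) S) := by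
    constructor
    · rintro ⟨τ, hτ⟩
      choose k hk using hτ
      refine ⟨Finset.univ.image (fun i => (i, k i)), ?_, ?_⟩
      · rw [Finset.card_image_of_injective _ (fun a b h => congrArg Prod.fst h),
          Finset.card_univ, Fintype.card_fin]
      · intro u hu v hv hadj
        simp only [Finset.mem_image, Finset.mem_univ, true_and] at hu hv
        obtain ⟨i, rfl⟩ := hu
        obtain ⟨j, rfl⟩ := hv
        rw [adj_iff] at hadj
        obtain ⟨hne, h | ⟨h1, h2⟩⟩ := hadj
        · exact hne (by simp at h; subst h; rfl)
        · exact h2 (by rw [← hk i, ← hk j, h1])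
    · rintro ⟨S, hcard, hind⟩
      have hinj : Set.InjOn (Prod.fst : Fin α × Fin 3 → Fin α) ↑S := by
        intro u hu v hv h
        by_contra hne
        exact hind u hu v hv ((adj_iff u v).mpr ⟨hne, Or.inl h⟩)
      have himg : S.image Prod.fst = Finset.univ := by
        apply Finset.eq_univ_of_card
        rw [Finset.card_image_of_injOn hinj, hcard, Fintype.card_fin]
      have hex : ∀ i : Fin α, ∃ v ∈ S, v.1 = i := by
        intro i
        have : i ∈ S.image Prod.fst := himg ▸ Finset.mem_univ i
        simpa using this
      choose v hvS hv1 using hex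
      refine ⟨fun x => if ∃ w ∈ S, (lit w.1 w.2).1 = x ∧ (lit w.1 w.2).2 = true
          then true else false, ?_⟩
      intro i
      refine ⟨(v i).2, ?_⟩
      have hw : (v i) ∈ S := hvS i
      have hrw : lit i (v i).2 = lit (v i).1 (v i).2 := by rw [hv1]
      rw [hrw]
      beta_reduce
      rcases hp : (lit (v i).1 (v i).2).2 with _ | _
      · rw [if_neg]
        rintro ⟨w', hw', hvar, hpol⟩
        have hne : w' ≠ v i := by
          intro e; rw [e, hp] at hpol; exact Bool.false_ne_true hpol
        exact hind w' hw' (v i) hw ((adj_iff _ _).mpr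
          ⟨hne, Or.inr ⟨hvar, by rw [hpol, hp]; simp⟩⟩)
      · rw [if_pos ⟨v i, hw, rfl, hp⟩]
  refine ⟨sat_iff_indep, sat_iff_indep.trans ?_⟩
  constructor
  · rintro ⟨S, hcard, hind⟩
    refine ⟨Sᶜ, ?_, ?_⟩
    · rw [Finset.card_compl, card3, hcard]; omega
    · intro u v hadj
      by_contra h
      push_neg at h
      simp only [Finset.notMem_compl] at h
      exact hind u h.1 v h.2 hadj
  · rintro ⟨C, hcard, hcov⟩
    refine ⟨Cᶜ, ?_, ?_⟩
    · rw [Finset.card_compl, card3, hcard]; omega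
    · intro u hu v hv hadj
      rcases hcov u v hadj with h | h
      · exact (Finset.mem_compl.mp hu) h
      · exact (Finset.mem_compl.mp hv) h
end

section
/- Let n, m ∈ ℕ with 2m ≤ n, let S₁ and S₂ be disjoint finite sets with |S₁| = |S₂| = n, let π = {S₁, S₂}, and let w be a symmetric integer weight function on S₁ ∪ S₂ vanishing on the diagonal such that w(i,j) ∈ {1, 2} for every pair of distinct elements i, j lying in the same part. If M ⊆ S₁ ∪ S₂ satisfies |M ∩ S₁| = |M ∩ S₂| = m and every same-part pair {i,j} with w(i,j) = 2 contains an element of M, then W(π_{−M}) = f_{n,m}(m). -/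
lemma two_choose_two_s10 (t : ℕ) : (2 * t.choose 2 : ℤ) = (t : ℤ) * ((t : ℤ) - 1) := by
  rcases t with _ | s
  · simp
  · have he : Even ((s+1) * s) := by rw [mul_comm]; exact Nat.even_mul_succ_self s
    have h : 2 * (s+1).choose 2 = (s+1) * s := by
      rw [Nat.choose_two_right]
      simp only [Nat.succ_sub_one]
      exact Nat.mul_div_cancel' he.two_dvd
    have h2 : (2 * (s+1).choose 2 : ℤ) = ((s:ℤ)+1) * (s:ℤ) := by exact_mod_cast h
    push_cast
    rw [h2]; ring

lemma Wsum_ones {V : Type*} [DecidableEq V] (w : V → V → ℤ) (S : Finset V)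
    (hdiag : ∀ i, w i i = 0)
    (h1 : ∀ i ∈ S, ∀ j ∈ S, i ≠ j → w i j = 1) :
    Wsum w S = (S.card.choose 2 : ℤ) := by
  have inner : ∀ i ∈ S, ∑ j ∈ S, w i j = (S.card : ℤ) - 1 := by
    intro i hi
    rw [← Finset.sum_erase_add S _ hi, hdiag, add_zero]
    rw [Finset.sum_congr rfl (fun j hj => h1 i hi j (Finset.mem_of_mem_erase hj)
      (Ne.symm (Finset.ne_of_mem_erase hj))), Finset.sum_const, nsmul_eq_mul, mul_one]
    rw [Finset.card_erase_of_mem hi]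
    push_cast [Nat.cast_sub (Finset.card_pos.mpr ⟨i, hi⟩)]
    ring
  have hsum : ∑ i ∈ S, ∑ j ∈ S, w i j = (S.card : ℤ) * ((S.card : ℤ) - 1) := by
    rw [Finset.sum_congr rfl inner, Finset.sum_const, nsmul_eq_mul]
  rw [Wsum, hsum, ← two_choose_two_s10]
  rw [Int.mul_ediv_cancel_left _ (by norm_num)]

lemma gauss_sum (n : ℕ) : ∀ m : ℕ, 2 * (∑ i ∈ Finset.Icc 1 m, ((n : ℤ) - (i : ℤ))) =
    2 * m * n - m * (m + 1) := by
  intro m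
  induction m with
  | zero => simp
  | succ k ih =>
    rw [Finset.sum_Icc_succ_top (by omega)]
    push_cast
    push_cast at ih
    linarith


theorem stmt10 {V : Type*} [DecidableEq V] (n m : ℕ) (hmn : 2 * m ≤ n)
    (S₁ S₂ : Finset V) (hdisj : Disjoint S₁ S₂)
    (h1 : S₁.card = n) (h2 : S₂.card = n)
    (w : V → V → ℤ)
    (hsymm : ∀ i j, w i j = w j i) (hdiag : ∀ i, w i i = 0)
    (hw12 : ∀ i j, i ≠ j → ((i ∈ S₁ ∧ j ∈ S₁) ∨ (i ∈ S₂ ∧ j ∈ S₂)) →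
      w i j = 1 ∨ w i j = 2)
    (M : Finset V) (hM : M ⊆ S₁ ∪ S₂)
    (hM1 : (M ∩ S₁).card = m) (hM2 : (M ∩ S₂).card = m)
    (hcov : ∀ i j, i ≠ j → ((i ∈ S₁ ∧ j ∈ S₁) ∨ (i ∈ S₂ ∧ j ∈ S₂)) →
      w i j = 2 → i ∈ M ∨ j ∈ M) :
    Wsum w (S₁ \ M) + Wsum w (S₂ \ M) = fnm n m m := by
  have key : ∀ (S : Finset V), ((∀ x ∈ S, x ∈ S₁) ∨ (∀ x ∈ S, x ∈ S₂)) → S = S₁ \ M ∨ S = S₂ \ M →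
      Wsum w S = ((n - m).choose 2 : ℤ) := by
    intro S hsub hS
    have hcard : S.card = n - m := by
      rcases hS with h | h <;> subst h
      · have := Finset.card_sdiff_add_card_inter S₁ M
        rw [Finset.inter_comm] at this; omega
      · have := Finset.card_sdiff_add_card_inter S₂ M
        rw [Finset.inter_comm] at this; omega
    rw [← hcard]
    apply Wsum_ones w S hdiag
    intro i hi j hj hij
    have hiM : i ∉ M := by rcases hS with h | h <;> subst h <;> exact (Finset.mem_sdiff.mp hi).2
    have hjM : j ∉ M := by rcases hS with h | h <;> subst h <;> exact (Finset.mem_sdiff.mp hj).2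
    have hpart : (i ∈ S₁ ∧ j ∈ S₁) ∨ (i ∈ S₂ ∧ j ∈ S₂) := by
      rcases hsub with h | h
      · exact Or.inl ⟨h i hi, h j hj⟩
      · exact Or.inr ⟨h i hi, h j hj⟩
    rcases hw12 i j hij hpart with h | h
    · exact h
    · rcases hcov i j hij hpart h with hc | hc
      · exact absurd hc hiM
      · exact absurd hc hjM
  have e1 : Wsum w (S₁ \ M) = ((n - m).choose 2 : ℤ) :=
    key _ (Or.inl fun x hx => (Finset.mem_sdiff.mp hx).1) (Or.inl rfl)
  have e2 : Wsum w (S₂ \ M) = ((n - m).choose 2 : ℤ) :=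
    key _ (Or.inr fun x hx => (Finset.mem_sdiff.mp hx).1) (Or.inr rfl)
  rw [e1, e2, fnm, show 2 * m - m = m from by omega]
  have hA := two_choose_two_s10 (n - m)
  have hB := two_choose_two_s10 n
  have hS := gauss_sum n m
  have hk : ((n - m : ℕ) : ℤ) = (n : ℤ) - (m : ℤ) := by
    rw [Nat.cast_sub (by omega)]
  rw [hk] at hA
  linear_combination hA - hB + hS
end

section
/- Let n, m ∈ ℕ with 2m < n, let S₁ and S₂ be disjoint finite sets with |S₁| = |S₂| = n, let π = {S₁, S₂}, and let w be a symmetric integer weight function on S₁ ∪ S₂ vanishing on the diagonal such that w(i,j) ∈ {1, 2} for every pair of distinct elements i, j lying in the same part. If M ⊆ S₁ ∪ S₂ satisfies |M| ≤ 2m and W(π_{−M}) ≤ f_{n,m}(m), then |M ∩ S₁| = |M ∩ S₂| = m and every same-part pair {i,j} with w(i,j) = 2 contains an element of M. -/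
lemma choose2_cast (n : ℕ) : ((n.choose 2 : ℤ)) * 2 = (n : ℤ) * ((n : ℤ) - 1) := by
  induction n with
  | zero => simp
  | succ k ih =>
    rw [Nat.choose_succ_succ, Nat.choose_one_right]
    push_cast
    nlinarith [ih]

lemma gauss_cast (n m : ℕ) :
    (∑ i ∈ Finset.Icc 1 m, ((n : ℤ) - (i : ℤ))) * 2 = 2 * m * n - m * (m + 1) := by
  induction m with
  | zero => simp
  | succ k ih =>
    rw [Finset.sum_Icc_succ_top (by omega)]
    push_cast
    push_cast at ih
    nlinarith [ih]

lemma fnm_eval (n m : ℕ) : fnm n m m = ((n : ℤ) - m) * ((n : ℤ) - m - 1) := by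
  unfold fnm
  rw [show 2 * m - m = m from by omega]
  linear_combination choose2_cast n - gauss_cast n m

lemma dsum_lb {V : Type*} [DecidableEq V] (w : V → V → ℤ) (T : Finset V)
    (hdiag : ∀ i, w i i = 0) (hw : ∀ i ∈ T, ∀ j ∈ T, i ≠ j → 1 ≤ w i j) :
    (T.card : ℤ) * ((T.card : ℤ) - 1) ≤ ∑ i ∈ T, ∑ j ∈ T, w i j := by
  have key : ∀ i ∈ T, ((T.card : ℤ) - 1) ≤ ∑ j ∈ T, w i j := by
    intro i hi
    rw [← Finset.sum_erase_add T _ hi, hdiag]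
    have h1 := Finset.card_nsmul_le_sum (T.erase i) (w i) 1 (fun j hj =>
        hw i hi j (Finset.mem_of_mem_erase hj) (Ne.symm (Finset.ne_of_mem_erase hj)))
    have h2 : (T.erase i).card = T.card - 1 := Finset.card_erase_of_mem hi
    have h3 : 1 ≤ T.card := Finset.card_pos.mpr ⟨i, hi⟩
    rw [h2] at h1
    simp only [nsmul_eq_mul, mul_one] at h1
    push_cast [Nat.cast_sub h3] at h1
    simpa using h1
  calc (T.card : ℤ) * ((T.card : ℤ) - 1) = ∑ _i ∈ T, ((T.card : ℤ) - 1) := by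
        rw [Finset.sum_const]; push_cast; ring
    _ ≤ _ := Finset.sum_le_sum key

lemma dsum_lb2 {V : Type*} [DecidableEq V] (w : V → V → ℤ) (T : Finset V)
    (hdiag : ∀ i, w i i = 0) (hw : ∀ i ∈ T, ∀ j ∈ T, i ≠ j → 1 ≤ w i j)
    {i₀ j₀ : V} (hi₀ : i₀ ∈ T) (hj₀ : j₀ ∈ T) (hne : i₀ ≠ j₀)
    (h2a : 2 ≤ w i₀ j₀) (h2b : 2 ≤ w j₀ i₀) :
    (T.card : ℤ) * ((T.card : ℤ) - 1) + 2 ≤ ∑ i ∈ T, ∑ j ∈ T, w i j := by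
  have key : ∀ i ∈ T, ((T.card : ℤ) - 1)
      + (if i = i₀ then (1:ℤ) else 0) + (if i = j₀ then (1:ℤ) else 0)
      ≤ ∑ j ∈ T, w i j := by
    intro i hi
    rw [← Finset.sum_erase_add T _ hi, hdiag, add_zero]
    have h2 : (T.erase i).card = T.card - 1 := Finset.card_erase_of_mem hi
    have h3 : 1 ≤ T.card := Finset.card_pos.mpr ⟨i, hi⟩
    have hcard : ((T.erase i).card : ℤ) = (T.card : ℤ) - 1 := by
      rw [h2]; push_cast [Nat.cast_sub h3]; ring
    by_cases hii : i = i₀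
    · subst hii
      simp only [if_pos rfl, if_neg hne]
      have hb : ∀ j ∈ T.erase i, (1:ℤ) + (if j = j₀ then 1 else 0) ≤ w i j := by
        intro j hj
        by_cases hjj : j = j₀
        · subst hjj; simpa using h2a
        · simp only [if_neg hjj, add_zero]
          exact hw i hi j (Finset.mem_of_mem_erase hj) (Ne.symm (Finset.ne_of_mem_erase hj))
      have := Finset.sum_le_sum hb
      rw [Finset.sum_add_distrib, Finset.sum_const, Finset.sum_ite_eq',
        if_pos (Finset.mem_erase.mpr ⟨Ne.symm hne, hj₀⟩)] at this
      simp only [nsmul_eq_mul, mul_one] at this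
      rw [hcard] at this
      simp only [if_true]
      linarith
    · by_cases hij : i = j₀
      · subst hij
        simp only [if_neg hii, if_pos rfl]
        have hb : ∀ j ∈ T.erase i, (1:ℤ) + (if j = i₀ then 1 else 0) ≤ w i j := by
          intro j hj
          by_cases hjj : j = i₀
          · subst hjj; simpa using h2b
          · simp only [if_neg hjj, add_zero]
            exact hw i hi j (Finset.mem_of_mem_erase hj) (Ne.symm (Finset.ne_of_mem_erase hj))
        have := Finset.sum_le_sum hb
        rw [Finset.sum_add_distrib, Finset.sum_const, Finset.sum_ite_eq',
          if_pos (Finset.mem_erase.mpr ⟨hne, hi₀⟩)] at this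
        simp only [nsmul_eq_mul, mul_one] at this
        rw [hcard] at this
        simp only [if_true]
        linarith
      · simp only [if_neg hii, if_neg hij, add_zero]
        have h1 := Finset.card_nsmul_le_sum (T.erase i) (w i) 1 (fun j hj =>
          hw i hi j (Finset.mem_of_mem_erase hj) (Ne.symm (Finset.ne_of_mem_erase hj)))
        simp only [nsmul_eq_mul, mul_one] at h1
        rw [hcard] at h1
        exact h1
  have := Finset.sum_le_sum key
  rw [Finset.sum_add_distrib, Finset.sum_add_distrib, Finset.sum_const,
    Finset.sum_ite_eq', Finset.sum_ite_eq', if_pos hi₀, if_pos hj₀] at this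
  simp only [nsmul_eq_mul, mul_one] at this
  linarith

lemma arith_key (N Mm p q k l : ℤ) (hm : 0 ≤ Mm) (hn : 2 * Mm < N)
    (hpq : p + q ≤ 2 * Mm)
    (hk : 2 * k = (N - p) * (N - p - 1)) (hl : 2 * l = (N - q) * (N - q - 1))
    (hle : k + l ≤ (N - Mm) * (N - Mm - 1)) :
    p = Mm ∧ q = Mm := by
  have key : (2 * (N - Mm) - 1) * (2 * Mm - (p + q)) + (Mm - p)^2 + (Mm - q)^2 ≤ 0 := by
    nlinarith [hk, hl, hle]
  have hd : 0 ≤ 2 * Mm - (p + q) := by linarith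
  have hcoef : (1:ℤ) ≤ 2 * (N - Mm) - 1 := by linarith
  have hmul : 1 * (2 * Mm - (p + q)) ≤ (2 * (N - Mm) - 1) * (2 * Mm - (p + q)) :=
    mul_le_mul_of_nonneg_right hcoef hd
  have hd0 : 2 * Mm - (p + q) = 0 := by nlinarith [sq_nonneg (Mm - p), sq_nonneg (Mm - q)]
  have hp' : Mm - p = 0 := by nlinarith [sq_nonneg (Mm - p), sq_nonneg (Mm - q)]
  have hq' : Mm - q = 0 := by nlinarith [sq_nonneg (Mm - p), sq_nonneg (Mm - q)]
  constructor <;> linarith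

theorem stmt11 {V : Type*} [DecidableEq V] (n m : ℕ) (hmn : 2 * m < n)
    (S₁ S₂ : Finset V) (hdisj : Disjoint S₁ S₂)
    (h1 : S₁.card = n) (h2 : S₂.card = n)
    (w : V → V → ℤ)
    (hsymm : ∀ i j, w i j = w j i) (hdiag : ∀ i, w i i = 0)
    (hw12 : ∀ i j, i ≠ j → ((i ∈ S₁ ∧ j ∈ S₁) ∨ (i ∈ S₂ ∧ j ∈ S₂)) →
      w i j = 1 ∨ w i j = 2)
    (M : Finset V) (hM : M ⊆ S₁ ∪ S₂) (hMcard : M.card ≤ 2 * m)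
    (hlow : Wsum w (S₁ \ M) + Wsum w (S₂ \ M) ≤ fnm n m m) :
    (M ∩ S₁).card = m ∧ (M ∩ S₂).card = m ∧
      ∀ i j, i ≠ j → ((i ∈ S₁ ∧ j ∈ S₁) ∨ (i ∈ S₂ ∧ j ∈ S₂)) →
        w i j = 2 → i ∈ M ∨ j ∈ M := by
  classical
  set T₁ := S₁ \ M with hT₁def
  set T₂ := S₂ \ M with hT₂def
  have hw1 : ∀ i ∈ T₁, ∀ j ∈ T₁, i ≠ j → 1 ≤ w i j := by
    intro i hi j hj hne
    rcases hw12 i j hne (Or.inl ⟨(Finset.mem_sdiff.mp hi).1, (Finset.mem_sdiff.mp hj).1⟩)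
      with h | h <;> omega
  have hw2' : ∀ i ∈ T₂, ∀ j ∈ T₂, i ≠ j → 1 ≤ w i j := by
    intro i hi j hj hne
    rcases hw12 i j hne (Or.inr ⟨(Finset.mem_sdiff.mp hi).1, (Finset.mem_sdiff.mp hj).1⟩)
      with h | h <;> omega
  have hc1 : T₁.card + (M ∩ S₁).card = n := by
    rw [Finset.inter_comm, ← h1]; exact Finset.card_sdiff_add_card_inter S₁ M
  have hc2 : T₂.card + (M ∩ S₂).card = n := by
    rw [Finset.inter_comm, ← h2]; exact Finset.card_sdiff_add_card_inter S₂ M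
  have hxy : (M ∩ S₁).card + (M ∩ S₂).card = M.card := by
    have hu : (M ∩ S₁) ∪ (M ∩ S₂) = M := by
      rw [← Finset.inter_union_distrib_left]
      exact Finset.inter_eq_left.mpr hM
    have hd : Disjoint (M ∩ S₁) (M ∩ S₂) :=
      Disjoint.mono Finset.inter_subset_right Finset.inter_subset_right hdisj
    rw [← Finset.card_union_of_disjoint hd, hu]
  have ha : (T₁.card : ℤ) = (n : ℤ) - ((M ∩ S₁).card : ℤ) := by
    have := congrArg (Nat.cast : ℕ → ℤ) hc1; push_cast at this; linarith
  have hb : (T₂.card : ℤ) = (n : ℤ) - ((M ∩ S₂).card : ℤ) := by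
    have := congrArg (Nat.cast : ℕ → ℤ) hc2; push_cast at this; linarith
  obtain ⟨k, hk⟩ := Int.even_mul_succ_self ((T₁.card : ℤ) - 1)
  obtain ⟨l, hl⟩ := Int.even_mul_succ_self ((T₂.card : ℤ) - 1)
  have hk2 : 2 * k = (T₁.card : ℤ) * ((T₁.card : ℤ) - 1) := by linear_combination -hk
  have hl2 : 2 * l = (T₂.card : ℤ) * ((T₂.card : ℤ) - 1) := by linear_combination -hl
  have hA := dsum_lb w T₁ hdiag hw1
  have hB := dsum_lb w T₂ hdiag hw2'
  have hAk : k ≤ Wsum w T₁ := by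
    have : (2 * k) / 2 ≤ (∑ i ∈ T₁, ∑ j ∈ T₁, w i j) / 2 :=
      Int.ediv_le_ediv (by norm_num) (by rw [hk2]; exact hA)
    rwa [Int.mul_ediv_cancel_left k (by norm_num)] at this
  have hBl : l ≤ Wsum w T₂ := by
    have : (2 * l) / 2 ≤ (∑ i ∈ T₂, ∑ j ∈ T₂, w i j) / 2 :=
      Int.ediv_le_ediv (by norm_num) (by rw [hl2]; exact hB)
    rwa [Int.mul_ediv_cancel_left l (by norm_num)] at this
  have hfe : fnm n m m = ((n : ℤ) - m) * ((n : ℤ) - m - 1) := fnm_eval n m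
  have hkl : k + l ≤ ((n : ℤ) - m) * ((n : ℤ) - m - 1) := by
    rw [← hfe]; linarith [hAk, hBl, hlow]
  have hpqZ : ((M ∩ S₁).card : ℤ) + ((M ∩ S₂).card : ℤ) ≤ 2 * (m : ℤ) := by
    have : ((M.card : ℤ)) ≤ 2 * (m : ℤ) := by exact_mod_cast hMcard
    have h' := congrArg (Nat.cast : ℕ → ℤ) hxy; push_cast at h'; linarith
  have hnZ : 2 * (m : ℤ) < (n : ℤ) := by exact_mod_cast hmn
  obtain ⟨hp, hq⟩ := arith_key (n : ℤ) (m : ℤ) ((M ∩ S₁).card : ℤ) ((M ∩ S₂).card : ℤ) k l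
    (by positivity) hnZ hpqZ (by rw [hk2, ha]) (by rw [hl2, hb]) hkl
  have hp' : (M ∩ S₁).card = m := by exact_mod_cast hp
  have hq' : (M ∩ S₂).card = m := by exact_mod_cast hq
  refine ⟨hp', hq', ?_⟩
  intro i j hne hpart hw2v
  by_contra hcon
  push_neg at hcon
  obtain ⟨hiM, hjM⟩ := hcon
  -- In either case, derive a contradiction
  have hcontr : False := by
    rcases hpart with ⟨hiS, hjS⟩ | ⟨hiS, hjS⟩
    · have hiT : i ∈ T₁ := Finset.mem_sdiff.mpr ⟨hiS, hiM⟩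
      have hjT : j ∈ T₁ := Finset.mem_sdiff.mpr ⟨hjS, hjM⟩
      have hA2 := dsum_lb2 w T₁ hdiag hw1 hiT hjT hne
        (le_of_eq hw2v.symm) (by rw [← hsymm]; exact le_of_eq hw2v.symm)
      have hAk2 : k + 1 ≤ Wsum w T₁ := by
        have h2k : 2 * (k + 1) ≤ ∑ i ∈ T₁, ∑ j ∈ T₁, w i j := by
          rw [mul_add, hk2]; linarith [hA2]
        have : (2 * (k + 1)) / 2 ≤ (∑ i ∈ T₁, ∑ j ∈ T₁, w i j) / 2 :=
          Int.ediv_le_ediv (by norm_num) h2k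
        rwa [Int.mul_ediv_cancel_left (k + 1) (by norm_num)] at this
      have hk3 : 2 * k = ((n : ℤ) - m) * ((n : ℤ) - m - 1) := by
        rw [hk2, ha, hp]
      have hl3 : 2 * l = ((n : ℤ) - m) * ((n : ℤ) - m - 1) := by
        rw [hl2, hb, hq]
      have : k + 1 + l ≤ ((n : ℤ) - m) * ((n : ℤ) - m - 1) := by
        rw [← hfe]; linarith [hAk2, hBl, hlow]
      linarith
    · have hiT : i ∈ T₂ := Finset.mem_sdiff.mpr ⟨hiS, hiM⟩
      have hjT : j ∈ T₂ := Finset.mem_sdiff.mpr ⟨hjS, hjM⟩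
      have hB2 := dsum_lb2 w T₂ hdiag hw2' hiT hjT hne
        (le_of_eq hw2v.symm) (by rw [← hsymm]; exact le_of_eq hw2v.symm)
      have hBl2 : l + 1 ≤ Wsum w T₂ := by
        have h2l : 2 * (l + 1) ≤ ∑ i ∈ T₂, ∑ j ∈ T₂, w i j := by
          rw [mul_add, hl2]; linarith [hB2]
        have : (2 * (l + 1)) / 2 ≤ (∑ i ∈ T₂, ∑ j ∈ T₂, w i j) / 2 :=
          Int.ediv_le_ediv (by norm_num) h2l
        rwa [Int.mul_ediv_cancel_left (l + 1) (by norm_num)] at this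
      have hk3 : 2 * k = ((n : ℤ) - m) * ((n : ℤ) - m - 1) := by
        rw [hk2, ha, hp]
      have hl3 : 2 * l = ((n : ℤ) - m) * ((n : ℤ) - m - 1) := by
        rw [hl2, hb, hq]
      have : k + (l + 1) ≤ ((n : ℤ) - m) * ((n : ℤ) - m - 1) := by
        rw [← hfe]; linarith [hAk, hBl2, hlow]
      linarith
  exact hcontr
end

section
/- Let G = (V, E) be a finite simple graph, define the symmetric weight function w on V by w(i,j) = 1 if {i,j} ∈ E and w(i,j) = 0 otherwise, and let π = {V} be the trivial 1-partition. Then for every M ⊆ V, W(π_{−M}) ≤ 0 if and only if M is a vertex cover of G. Consequently, for every m ∈ ℕ, G has a vertex cover of size at most m if and only if there exists M ⊆ V with |M| ≤ m and W(π_{−M}) ≤ 0. -/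
theorem stmt13 {V : Type*} [Fintype V] [DecidableEq V] (G : SimpleGraph V)
    [DecidableRel G.Adj] (w : V → V → ℤ)
    (hw : ∀ i j, w i j = if G.Adj i j then 1 else 0) :
    (∀ M : Finset V, Wsum w (Finset.univ \ M) ≤ 0 ↔ IsVertexCover G M) ∧
      (∀ m : ℕ,
        (∃ C : Finset V, C.card ≤ m ∧ IsVertexCover G C) ↔
          (∃ M : Finset V, M.card ≤ m ∧ Wsum w (Finset.univ \ M) ≤ 0)) := by
  have hwnn : ∀ i j, 0 ≤ w i j := by
    intro i j; rw [hw]; split <;> norm_num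
  have key : ∀ M : Finset V, Wsum w (Finset.univ \ M) ≤ 0 ↔ IsVertexCover G M := by
    intro M
    set S := Finset.univ \ M with hS
    constructor
    · intro h u v hadj
      by_contra hc
      push_neg at hc
      obtain ⟨hu, hv⟩ := hc
      have huS : u ∈ S := by simp [hS, hu]
      have hvS : v ∈ S := by simp [hS, hv]
      have hne : u ≠ v := G.ne_of_adj hadj
      have hrow : ∀ i ∈ S, 0 ≤ ∑ j ∈ S, w i j :=
        fun i _ => Finset.sum_nonneg (fun j _ => hwnn i j)
      have h1 : (1 : ℤ) ≤ ∑ j ∈ S, w u j := by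
        calc (1:ℤ) = w u v := by rw [hw]; simp [hadj]
        _ ≤ ∑ j ∈ S, w u j := Finset.single_le_sum (fun j _ => hwnn u j) hvS
      have h2 : (1 : ℤ) ≤ ∑ j ∈ S, w v j := by
        calc (1:ℤ) = w v u := by rw [hw]; simp [hadj.symm]
        _ ≤ ∑ j ∈ S, w v j := Finset.single_le_sum (fun j _ => hwnn v j) huS
      have h3 : (2 : ℤ) ≤ ∑ i ∈ S, ∑ j ∈ S, w i j := by
        have e1 := Finset.add_sum_erase S (fun i => ∑ j ∈ S, w i j) huS
        have hvS' : v ∈ S.erase u := Finset.mem_erase.mpr ⟨hne.symm, hvS⟩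
        have e2 := Finset.add_sum_erase (S.erase u) (fun i => ∑ j ∈ S, w i j) hvS'
        have hrest : 0 ≤ ∑ i ∈ (S.erase u).erase v, ∑ j ∈ S, w i j :=
          Finset.sum_nonneg (fun i _ => Finset.sum_nonneg (fun j _ => hwnn i j))
        linarith
      have : (1 : ℤ) ≤ Wsum w S := by
        unfold Wsum
        omega
      omega
    · intro hcov
      have : ∀ i ∈ S, ∀ j ∈ S, w i j = 0 := by
        intro i hi j hj
        rw [hw]
        split
        · next hadj =>
          rcases hcov i j hadj with h | h
          · simp [hS] at hi; exact absurd h hi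
          · simp [hS] at hj; exact absurd h hj
        · rfl
      unfold Wsum
      rw [Finset.sum_congr rfl (fun i hi => Finset.sum_eq_zero (this i hi))]
      simp
  refine ⟨key, fun m => ⟨fun ⟨C, hC, hcov⟩ => ⟨C, hC, (key C).mpr hcov⟩,
    fun ⟨M, hM, hw'⟩ => ⟨M, hM, (key M).mp hw'⟩⟩⟩
end
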